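/- Let n be an odd positive integer, F the finite field with 2^n elements, i a positive integer with gcd(i,n) = 1, and f : F → F the Gold function f(x) = x^(2^i+1). Let S be an i-compatible 𝔽₂-linear subspace of F, and set X = { x ∈ F : Tr(a·x) = 0 for all a ∈ S^(−1/(2^i+1)) }, where Tr : F → 𝔽₂ is the absolute trace. Then X × S is a WZ space of f. -/

import Mathlib

noncomputable instance (n : ℕ) : Fintype (GaloisField 2 n) := Fintype.ofFinite _

/-- The absolute trace from `GF(2^n)` to `𝔽₂`. -/
noncomputable def Tr (n : ℕ) : GaloisField 2 n → ZMod 2 :=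
  Algebra.trace (ZMod 2) (GaloisField 2 n)

/-- The Walsh transform of `f : GF(2^n) → GF(2^n)` at `(a, b)`. -/
noncomputable def W (n : ℕ) (f : GaloisField 2 n → GaloisField 2 n)
    (a b : GaloisField 2 n) : ℤ :=
  ∑ x : GaloisField 2 n, (-1) ^ (Tr n (a * x + b * f x)).val

/-- A WZ space of `f`: an `𝔽₂`-subspace of `GF(2^n) × GF(2^n)` of dimension `n`
all of whose nonzero elements are Walsh zeros of `f`. -/
def IsWZSpace (n : ℕ) (f : GaloisField 2 n → GaloisField 2 n)
    (S : Submodule (ZMod 2) (GaloisField 2 n × GaloisField 2 n)) : Prop :=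
  Module.finrank (ZMod 2) S = n ∧
    ∀ p ∈ S, p ≠ (0 : GaloisField 2 n × GaloisField 2 n) → W n f p.1 p.2 = 0


namespace Stmt10Aux

open Module

variable {n : ℕ}

lemma Tr_add (x y : GaloisField 2 n) : Tr n (x + y) = Tr n x + Tr n y := by
  unfold Tr; exact map_add _ x y

lemma neg_one_flip (v : ZMod 2) :
    (-1 : ℤ) ^ ((v + 1 : ZMod 2)).val = -(-1 : ℤ) ^ v.val := by
  revert v; decide

lemma sum_flip_zero {G : Type*} [Fintype G] [AddGroup G] (h : G → ZMod 2) (t : G)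
    (ht : ∀ u, h (u + t) = h u + 1) : ∑ u : G, (-1 : ℤ) ^ (h u).val = 0 := by
  have h1 : ∑ u : G, (-1 : ℤ) ^ (h (u + t)).val = ∑ u : G, (-1 : ℤ) ^ (h u).val := by
    have := Equiv.sum_comp (Equiv.addRight t) (fun u => (-1 : ℤ) ^ (h u).val)
    simpa [Equiv.coe_addRight] using this
  have h2 : ∑ u : G, (-1 : ℤ) ^ (h (u + t)).val
      = -∑ u : G, (-1 : ℤ) ^ (h u).val := by
    rw [← Finset.sum_neg_distrib]
    exact Finset.sum_congr rfl fun u _ => by rw [ht u, neg_one_flip]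
  have := h1.symm.trans h2
  linarith

lemma Tr_sq (x : GaloisField 2 n) : Tr n (x ^ 2) = Tr n x := by
  have hcom : ∀ c : ZMod 2,
      (frobeniusEquiv (GaloisField 2 n) 2) (algebraMap (ZMod 2) (GaloisField 2 n) c)
        = algebraMap (ZMod 2) (GaloisField 2 n) c := by
    intro c
    rw [frobeniusEquiv_apply, frobenius_def, ← map_pow]
    congr 1
    revert c; decide
  let e : GaloisField 2 n ≃ₐ[ZMod 2] GaloisField 2 n :=
    AlgEquiv.ofRingEquiv hcom
  have hex : e x = x ^ 2 := rfl
  have h := Algebra.trace_eq_of_algEquiv e x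
  unfold Tr
  rw [← hex]
  exact h

lemma Tr_pow2 (k : ℕ) (x : GaloisField 2 n) : Tr n (x ^ 2 ^ k) = Tr n x := by
  induction k with
  | zero => simp
  | succ k ih => rw [pow_succ, pow_mul, Tr_sq, ih]

lemma Tr_one (hodd : Odd n) : Tr n (1 : GaloisField 2 n) = 1 := by
  have hn : n ≠ 0 := by rintro rfl; simp [Nat.odd_iff] at hodd
  unfold Tr
  rw [show (1 : GaloisField 2 n) = algebraMap (ZMod 2) (GaloisField 2 n) 1 from (map_one _).symm,
    Algebra.trace_algebraMap, GaloisField.finrank 2 hn, nsmul_eq_mul, mul_one,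
    ← ZMod.natCast_mod n 2, Nat.odd_iff.mp hodd]
  rfl

lemma card_pow_finrank {M : Type*} [AddCommGroup M] [Module (ZMod 2) M] [Finite M] :
    Nat.card M = 2 ^ Module.finrank (ZMod 2) M := by
  haveI : Fintype M := Fintype.ofFinite M
  rw [Nat.card_eq_fintype_card, card_eq_pow_finrank (K := ZMod 2) (V := M), ZMod.card]

end Stmt10Aux

/-- If `S` is an `i`-compatible `𝔽₂`-subspace of `GF(2^n)` (`n` odd,
`gcd(i,n) = 1`) and `X = {x : Tr(a·x) = 0 for all a ∈ S^(−1/(2^i+1))}`, then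
`X × S` is a WZ space of the Gold function `f(x) = x^(2^i+1)`. Here `g` is the map
`y ↦ y^(−1/(2^i+1))`, characterized by `(g y)^(2^i+1) = y⁻¹` (with `0⁻¹ = 0`). -/
theorem stmt10 (n i : ℕ) (hn : 0 < n) (hodd : Odd n) (hi : 0 < i)
    (hgcd : Nat.gcd i n = 1)
    (f : GaloisField 2 n → GaloisField 2 n) (hf : ∀ x, f x = x ^ (2 ^ i + 1))
    (g : GaloisField 2 n → GaloisField 2 n) (hg : ∀ y, (g y) ^ (2 ^ i + 1) = y⁻¹)
    (S : Submodule (ZMod 2) (GaloisField 2 n))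
    (hS : ∃ T : Submodule (ZMod 2) (GaloisField 2 n),
      (T : Set (GaloisField 2 n)) = g '' (S : Set (GaloisField 2 n))) :
    ∃ Z : Submodule (ZMod 2) (GaloisField 2 n × GaloisField 2 n),
      (Z : Set (GaloisField 2 n × GaloisField 2 n)) =
        {x : GaloisField 2 n |
            ∀ a ∈ g '' (S : Set (GaloisField 2 n)), Tr n (a * x) = 0} ×ˢ
          (S : Set (GaloisField 2 n)) ∧
      IsWZSpace n f Z := by
  classical
  open Stmt10Aux in
  obtain ⟨T, hT⟩ := hS
  have hn0 : n ≠ 0 := hn.ne'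
  -- the trace form and the orthogonal complement of T
  have nd : (Algebra.traceForm (ZMod 2) (GaloisField 2 n)).Nondegenerate :=
    traceForm_nondegenerate _ _
  set Φ : Submodule (ZMod 2) (Module.Dual (ZMod 2) (GaloisField 2 n)) :=
    T.map ((Algebra.traceForm (ZMod 2) (GaloisField 2 n)).toDual nd).toLinearMap with hΦdef
  set X := Φ.dualCoannihilator with hXdef
  have hXmem : ∀ x : (GaloisField 2 n), x ∈ X ↔ ∀ a ∈ g '' (S : Set (GaloisField 2 n)), Tr n (a * x) = 0 := by
    intro x
    rw [hXdef, Submodule.mem_dualCoannihilator]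
    constructor
    · intro H a ha
      have haT : a ∈ T := by rw [← SetLike.mem_coe, hT]; exact ha
      have h2 := H _ (Submodule.mem_map_of_mem
        (f := ((Algebra.traceForm (ZMod 2) (GaloisField 2 n)).toDual nd).toLinearMap) haT)
      have h3 : (Algebra.traceForm (ZMod 2) (GaloisField 2 n)).toDual nd a x = 0 := h2
      rwa [LinearMap.BilinForm.toDual_def, Algebra.traceForm_apply] at h3
    · rintro H φ hφ
      obtain ⟨a, haT, rfl⟩ := Submodule.mem_map.mp hφ
      have ha : a ∈ g '' (S : Set (GaloisField 2 n)) := by rw [← hT]; exact haT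
      have h3 : (Algebra.traceForm (ZMod 2) (GaloisField 2 n)).toDual nd a x = 0 := by
        rw [LinearMap.BilinForm.toDual_def, Algebra.traceForm_apply]
        exact H a ha
      exact h3
  -- Walsh zeros with second coordinate 0
  have hW0 : ∀ a : (GaloisField 2 n), a ≠ 0 → W n f a 0 = 0 := by
    intro a ha
    unfold W
    refine sum_flip_zero (fun x => Tr n (a * x + 0 * f x)) a⁻¹ ?_
    intro u
    rw [zero_mul, add_zero, zero_mul, add_zero, mul_add, mul_inv_cancel₀ ha,
      Tr_add, Tr_one hodd]
  -- Walsh zeros with second coordinate nonzero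
  have hWb : ∀ a b : (GaloisField 2 n), b ≠ 0 → Tr n (a * g b) = 0 → W n f a b = 0 := by
    intro a b hb htr
    have hgb : (g b) ^ (2 ^ i + 1) = b⁻¹ := hg b
    have hgb0 : g b ≠ 0 := by
      intro h0
      rw [h0, zero_pow (by positivity)] at hgb
      exact hb (by rw [← inv_inv b, ← hgb, inv_zero])
    have hbc : b * (g b) ^ (2 ^ i + 1) = 1 := by rw [hgb]; exact mul_inv_cancel₀ hb
    have hsimp : ∀ u : (GaloisField 2 n),
        a * (g b * u) + b * (g b * u) ^ (2 ^ i + 1)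
          = (a * g b) * u + u ^ (2 ^ i + 1) := by
      intro u
      rw [mul_pow, ← mul_assoc b, hbc, one_mul, ← mul_assoc]
    have key : ∀ u : (GaloisField 2 n),
        Tr n (a * (g b * (u + 1)) + b * f (g b * (u + 1)))
          = Tr n (a * (g b * u) + b * f (g b * u)) + 1 := by
      intro u
      rw [hf, hf, hsimp, hsimp]
      have hexp : (u + 1 : (GaloisField 2 n)) ^ (2 ^ i + 1)
          = u ^ (2 ^ i + 1) + u ^ (2 ^ i) + u + 1 := by
        rw [pow_succ, add_pow_char_pow, one_pow]
        ring
      have harg : (a * g b) * (u + 1) + (u + 1) ^ (2 ^ i + 1)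
          = (((((a * g b) * u + u ^ (2 ^ i + 1)) + a * g b) + u ^ (2 ^ i)) + u) + 1 := by
        rw [hexp]; ring
      rw [harg]
      simp only [Tr_add, htr, Tr_pow2, Tr_one hodd]
      generalize Tr n (a * g b * u) = v1
      generalize Tr n (u ^ (2 ^ i + 1)) = v2
      generalize Tr n u = w
      revert v1 v2 w; decide
    unfold W
    have hre := Equiv.sum_comp (Equiv.mulLeft₀ (g b) hgb0)
      (fun x => (-1 : ℤ) ^ (Tr n (a * x + b * f x)).val)
    simp only [Equiv.mulLeft₀_apply] at hre
    rw [← hre]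
    exact sum_flip_zero (fun u => Tr n (a * (g b * u) + b * f (g b * u))) 1 key
  -- cardinality / dimension bookkeeping
  have ginj : Function.Injective g := by
    intro y y' h
    have : y⁻¹ = y'⁻¹ := by rw [← hg y, ← hg y', h]
    exact inv_injective this
  have hcardT : Nat.card T = Nat.card S := by
    have h1 : Nat.card T = Nat.card (g '' (S : Set (GaloisField 2 n))) := by
      rw [← hT]; rfl
    rw [h1, Nat.card_image_of_injective ginj]
    rfl
  have hrankTS : Module.finrank (ZMod 2) T = Module.finrank (ZMod 2) S := by
    have := hcardT
    rw [card_pow_finrank, card_pow_finrank] at this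
    exact Nat.pow_right_injective (le_refl 2) this
  have hrankXS : Module.finrank (ZMod 2) X + Module.finrank (ZMod 2) S = n := by
    have h1 := Subspace.finrank_add_finrank_dualCoannihilator_eq Φ
    have h2 : Module.finrank (ZMod 2) Φ = Module.finrank (ZMod 2) T :=
      LinearEquiv.finrank_map_eq _ T
    have h3 : Module.finrank (ZMod 2) (GaloisField 2 n) = n := GaloisField.finrank 2 hn0
    rw [← hXdef] at h1
    omega
  refine ⟨X.prod S, ?_, ?_, ?_⟩
  · rw [Submodule.prod_coe]
    congr 1
    ext x
    exact hXmem x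
  · -- dimension
    have hcardZ : Nat.card (X.prod S) = Nat.card X * Nat.card S := by
      have hset : ((X.prod S : Submodule (ZMod 2) ((GaloisField 2 n) × (GaloisField 2 n))) : Set ((GaloisField 2 n) × (GaloisField 2 n)))
          = (X : Set (GaloisField 2 n)) ×ˢ (S : Set (GaloisField 2 n)) := Submodule.prod_coe X S
      calc Nat.card (X.prod S) = Nat.card ((X : Set (GaloisField 2 n)) ×ˢ (S : Set (GaloisField 2 n)) : Set ((GaloisField 2 n) × (GaloisField 2 n))) :=
            Nat.card_congr (Equiv.setCongr hset)
        _ = Nat.card (X × S) := Nat.card_congr (Equiv.Set.prod _ _)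
        _ = Nat.card X * Nat.card S := Nat.card_prod _ _
    have := hcardZ
    rw [card_pow_finrank, card_pow_finrank, card_pow_finrank, ← pow_add] at this
    have h4 := Nat.pow_right_injective (le_refl 2) this
    rw [h4, hrankXS]
  · -- Walsh zeros
    rintro ⟨a, b⟩ hp hne
    rw [Submodule.mem_prod] at hp
    obtain ⟨haX, hbS⟩ := hp
    by_cases hb : b = 0
    · subst hb
      have ha : a ≠ 0 := fun h => hne (by rw [h]; rfl)
      exact hW0 a ha
    · refine hWb a b hb ?_
      have hgbS : g b ∈ g '' (S : Set (GaloisField 2 n)) := ⟨b, hbS, rfl⟩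
      rw [mul_comm]
      exact (hXmem a).mp haX (g b) hgbS
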